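/- If T^{(i)}_{(1)}(t,x,x₁) transforms as a d-tensor of type T^{(i)}_{(1)} (i.e. T̃^{(k)} = T^{(j)}(dt/dt̃)(∂x̃^k/∂x^j)) and F^{(i)}_{(1)1} transforms by the SODE law, then the h-KCC-covariant derivative DT^{(i)}/dt = dT^{(i)}/dt + (1/2)(∂F^{(i)}/∂x₁^r)T^{(r)} − (1/2)H¹₁₁T^{(i)}, evaluated along a curve, transforms as a d-tensor of type T^{(i)}_{(1)1}, i.e. with factor (dt/dt̃)²(∂x̃^k/∂x^j). -/

import Mathlib

noncomputable section

/-- Partial derivative of `f` with respect to the `j`-th coordinate at `x`. -/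
def pd {n : ℕ} (f : (Fin n → ℝ) → ℝ) (x : Fin n → ℝ) (j : Fin n) : ℝ :=
  deriv (fun s => f (Function.update x j s)) (x j)

/-- Jacobian `∂x̃^k/∂x^j` of the spatial change of coordinates `φ` (with `x̃ = φ x`). -/
def Jac {n : ℕ} (φ : (Fin n → ℝ) → (Fin n → ℝ)) (x : Fin n → ℝ) (k j : Fin n) : ℝ :=
  pd (fun y => φ y k) x j

/-- `dt/dt̃`, expressed at the old time `t` (with `t̃ = a t`). -/
def dtdT (a : ℝ → ℝ) (t : ℝ) : ℝ := (deriv a t)⁻¹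

/-- The induced fibre coordinate `x̃₁^k = (∂x̃^k/∂x^j)(dt/dt̃) x₁^j`. -/
def fib {n : ℕ} (a : ℝ → ℝ) (φ : (Fin n → ℝ) → (Fin n → ℝ))
    (t : ℝ) (x v : Fin n → ℝ) (k : Fin n) : ℝ :=
  (∑ j, Jac φ x k j * v j) * dtdT a t

/-- A (global) smooth diffeomorphic change of coordinates `t̃ = a t`, `x̃ = φ x`,
with inverse maps `b` and `ψ`. -/
def IsCoordChange (n : ℕ) (a b : ℝ → ℝ) (φ ψ : (Fin n → ℝ) → (Fin n → ℝ)) : Prop :=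
  ContDiff ℝ (⊤ : ℕ∞) a ∧ ContDiff ℝ (⊤ : ℕ∞) b ∧ (∀ t, b (a t) = t) ∧ (∀ s, a (b s) = s) ∧
    (∀ t, deriv a t ≠ 0) ∧ ContDiff ℝ (⊤ : ℕ∞) φ ∧ ContDiff ℝ (⊤ : ℕ∞) ψ ∧
    (∀ x, ψ (φ x) = x) ∧ (∀ y, φ (ψ y) = y)

/-- Smoothness of a local object on the 1-jet space. -/
def SmoothJet {n : ℕ} (G : ℝ → (Fin n → ℝ) → (Fin n → ℝ) → Fin n → ℝ) : Prop :=
  ContDiff ℝ (⊤ : ℕ∞) (fun p : ℝ × (Fin n → ℝ) × (Fin n → ℝ) => G p.1 p.2.1 p.2.2)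

/-- The common transformation law of temporal semisprays (`c = 2`) and of the
temporal components of nonlinear connections (`c = 1`):
`c·H̃^{(k)} = c·H^{(j)} (dt/dt̃)² ∂x̃^k/∂x^j − (dt/dt̃) ∂x̃₁^k/∂t`. -/
def TemporalLaw {n : ℕ} (a : ℝ → ℝ) (φ : (Fin n → ℝ) → (Fin n → ℝ)) (c : ℝ)
    (H Ht : ℝ → (Fin n → ℝ) → (Fin n → ℝ) → Fin n → ℝ) : Prop :=
  ∀ t x v k, c * Ht (a t) (φ x) (fib a φ t x v) k =
    c * (∑ j, H t x v j * (dtdT a t) ^ 2 * Jac φ x k j)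
      - dtdT a t * deriv (fun s => fib a φ s x v k) t

/-- The spatial semispray transformation law:
`2G̃^{(k)} = 2G^{(j)} (dt/dt̃)² ∂x̃^k/∂x^j − (∂x^m/∂x̃^j)(∂x̃₁^k/∂x^m) x̃₁^j`. -/
def SpatialSemisprayLaw {n : ℕ} (a : ℝ → ℝ) (φ ψ : (Fin n → ℝ) → (Fin n → ℝ))
    (G Gt : ℝ → (Fin n → ℝ) → (Fin n → ℝ) → Fin n → ℝ) : Prop :=
  ∀ t x v k, 2 * Gt (a t) (φ x) (fib a φ t x v) k =
    2 * (∑ j, G t x v j * (dtdT a t) ^ 2 * Jac φ x k j)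
      - ∑ j, ∑ m, Jac ψ (φ x) m j * pd (fun y => fib a φ t y v k) x m
          * fib a φ t x v j

/-- The transformation law of the spatial components of a nonlinear connection:
`Ñ^{(k)}_{(1)l} = N^{(j)}_{(1)i} (dt/dt̃)(∂x^i/∂x̃^l)(∂x̃^k/∂x^j) − (∂x^m/∂x̃^l)(∂x̃₁^k/∂x^m)`. -/
def SpatialConnLaw {n : ℕ} (a : ℝ → ℝ) (φ ψ : (Fin n → ℝ) → (Fin n → ℝ))
    (N Nt : ℝ → (Fin n → ℝ) → (Fin n → ℝ) → Fin n → Fin n → ℝ) : Prop :=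
  ∀ t x v k l, Nt (a t) (φ x) (fib a φ t x v) k l =
    (∑ j, ∑ i, N t x v j i * dtdT a t * Jac ψ (φ x) i l * Jac φ x k j)
      - ∑ m, Jac ψ (φ x) m l * pd (fun y => fib a φ t y v k) x m

/-- The SODE transformation law:
`F̃^{(r)} = F^{(j)} (dt/dt̃)² ∂x̃^r/∂x^j − (dt/dt̃) ∂x̃₁^r/∂t − (∂x^m/∂x̃^j)(∂x̃₁^r/∂x^m) x̃₁^j`. -/
def SODELaw {n : ℕ} (a : ℝ → ℝ) (φ ψ : (Fin n → ℝ) → (Fin n → ℝ))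
    (F Ft : ℝ → (Fin n → ℝ) → (Fin n → ℝ) → Fin n → ℝ) : Prop :=
  ∀ t x v k, Ft (a t) (φ x) (fib a φ t x v) k =
    (∑ j, F t x v j * (dtdT a t) ^ 2 * Jac φ x k j)
      - dtdT a t * deriv (fun s => fib a φ s x v k) t
      - ∑ j, ∑ m, Jac ψ (φ x) m j * pd (fun y => fib a φ t y v k) x m
          * fib a φ t x v j

/-- The transformation law of the temporal Christoffel symbol:
`H̃¹₁₁ = H¹₁₁ (dt/dt̃) + (dt̃/dt)(d²t/dt̃²)`. -/
def TemporalChristoffelLaw (a b H Ht : ℝ → ℝ) : Prop :=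
  ∀ t, Ht (a t) = H t * dtdT a t + deriv a t * deriv (deriv b) (a t)

/-- The velocity of a curve `c` in `M`. -/
def vel {n : ℕ} (c : ℝ → Fin n → ℝ) (t : ℝ) : Fin n → ℝ :=
  fun i => deriv (fun s => c s i) t

/-- The h-KCC-covariant derivative of a d-tensor `T^{(i)}_{(1)}`, evaluated along the
curve `t ↦ (t, c(t), dc/dt)`:
`DT^{(i)}/dt = dT^{(i)}/dt + (1/2)(∂F^{(i)}/∂x₁^r) T^{(r)} − (1/2) H¹₁₁ T^{(i)}`. -/
def covD {n : ℕ} (F T : ℝ → (Fin n → ℝ) → (Fin n → ℝ) → Fin n → ℝ) (H : ℝ → ℝ)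
    (c : ℝ → Fin n → ℝ) (t : ℝ) (k : Fin n) : ℝ :=
  deriv (fun s => T s (c s) (vel c s) k) t
    + (1 / 2) * ∑ r, pd (fun w => F t (c t) w k) (vel c t) r * T t (c t) (vel c t) r
    - (1 / 2) * H t * T t (c t) (vel c t) k

/-- The transformation law of a d-tensor of type `T^{(i)}_{(1)}`:
`T̃^{(k)} = T^{(j)} (dt/dt̃) ∂x̃^k/∂x^j`. -/
def DTensorLaw {n : ℕ} (a : ℝ → ℝ) (φ : (Fin n → ℝ) → (Fin n → ℝ))
    (T Tt : ℝ → (Fin n → ℝ) → (Fin n → ℝ) → Fin n → ℝ) : Prop :=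
  ∀ t x v k, Tt (a t) (φ x) (fib a φ t x v) k =
    ∑ j, T t x v j * dtdT a t * Jac φ x k j

namespace KCC
variable {n : ℕ}

lemma pd_eq_fderiv (f : (Fin n → ℝ) → ℝ) (x : Fin n → ℝ) (j : Fin n)
    (hf : DifferentiableAt ℝ f x) :
    pd f x j = fderiv ℝ f x (Pi.single j 1) := by
  have hx : Function.update x j (x j) = x := by simp
  have hfd : HasFDerivAt f (fderiv ℝ f x) (Function.update x j (x j)) := by
    rw [hx]; exact hf.hasFDerivAt
  exact (hfd.comp_hasDerivAt (x j) (hasDerivAt_update x j (x j))).deriv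

lemma fderiv_expand (f : (Fin n → ℝ) → ℝ) (x d : Fin n → ℝ)
    (hf : DifferentiableAt ℝ f x) :
    fderiv ℝ f x d = ∑ j, d j * pd f x j := by
  have hd : d = ∑ j, d j • (Pi.single j (1:ℝ) : Fin n → ℝ) := by
    funext i
    rw [Finset.sum_apply]
    simp [Pi.single_apply]
  nth_rewrite 1 [hd]
  rw [map_sum]
  refine Finset.sum_congr rfl fun j _ => ?_
  rw [pd_eq_fderiv f x j hf]
  simp

lemma vel_hasDerivAt (c : ℝ → Fin n → ℝ) (hc : ContDiff ℝ (⊤ : ℕ∞) c) (t : ℝ) :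
    HasDerivAt c (vel c t) t := by
  refine hasDerivAt_pi.2 fun i => ?_
  exact ((contDiff_pi.mp hc i).differentiable (by simp) _).hasDerivAt

lemma contDiff_vel (c : ℝ → Fin n → ℝ) (hc : ContDiff ℝ (⊤ : ℕ∞) c) :
    ContDiff ℝ (⊤:ℕ∞) (vel c) := by
  refine contDiff_pi.2 fun i => ?_
  have := (contDiff_pi.mp hc i).of_le (le_rfl : ((⊤:ℕ∞):WithTop ℕ∞) ≤ ((⊤:ℕ∞):WithTop ℕ∞))
  exact (contDiff_infty_iff_deriv.mp this).2

lemma hasDerivAt_comp_curve (f : (Fin n → ℝ) → ℝ) (hf : ContDiff ℝ (⊤:ℕ∞) f)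
    (c : ℝ → Fin n → ℝ) (hc : ContDiff ℝ (⊤ : ℕ∞) c) (t : ℝ) :
    HasDerivAt (fun s => f (c s)) (∑ j, vel c t j * pd f (c t) j) t := by
  have h1 := (hf.differentiable (by simp) (c t)).hasFDerivAt.comp_hasDerivAt t
      (vel_hasDerivAt c hc t)
  rw [fderiv_expand f (c t) (vel c t) (hf.differentiable (by simp) (c t))] at h1
  exact h1

lemma Jac_eq (φ : (Fin n → ℝ) → (Fin n → ℝ)) (hφ : ContDiff ℝ (⊤ : ℕ∞) φ) (x : Fin n → ℝ)
    (k j : Fin n) :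
    Jac φ x k j = fderiv ℝ (fun y => φ y k) x (Pi.single j 1) :=
  pd_eq_fderiv _ x j ((contDiff_pi.mp hφ k).differentiable (by simp) x)

lemma contDiff_Jac (φ : (Fin n → ℝ) → (Fin n → ℝ)) (hφ : ContDiff ℝ (⊤ : ℕ∞) φ) (k j : Fin n) :
    ContDiff ℝ (⊤:ℕ∞) (fun y => Jac φ y k j) := by
  have h1 : (fun y => Jac φ y k j)
      = fun y => fderiv ℝ (fun z => φ z k) y (Pi.single j 1) := by
    funext y; exact Jac_eq φ hφ y k j
  rw [h1]
  have h2 : ContDiff ℝ (⊤:ℕ∞) (fderiv ℝ (fun z => φ z k)) :=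
    (contDiff_pi.mp hφ k).fderiv_right (by simp)
  exact h2.clm_apply contDiff_const

lemma fderiv_app_coord (g : (Fin n → ℝ) → (Fin n → ℝ)) (x : Fin n → ℝ)
    (hg : DifferentiableAt ℝ g x) (u : Fin n → ℝ) (i : Fin n) :
    fderiv ℝ g x u i = fderiv ℝ (fun y => g y i) x u := by
  have h1 : HasFDerivAt (fun y => g y i)
      ((ContinuousLinearMap.proj i).comp (fderiv ℝ g x)) x :=
    ((ContinuousLinearMap.proj (R := ℝ) (φ := fun _ : Fin n => ℝ) i).hasFDerivAt.comp x
      hg.hasFDerivAt : HasFDerivAt (fun y => (ContinuousLinearMap.proj (R := ℝ)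
        (φ := fun _ : Fin n => ℝ) i) (g y)) _ x)
  rw [h1.fderiv]
  rfl

lemma jac_inv (φ ψ : (Fin n → ℝ) → (Fin n → ℝ)) (hφ : ContDiff ℝ (⊤ : ℕ∞) φ)
    (hψ : ContDiff ℝ (⊤ : ℕ∞) ψ) (hψφ : ∀ x, ψ (φ x) = x) (x : Fin n → ℝ) (m r : Fin n) :
    ∑ j, Jac ψ (φ x) m j * Jac φ x j r = if m = r then 1 else 0 := by
  set w := fderiv ℝ φ x (Pi.single r 1) with hwdef
  have hw : ∀ j, w j = Jac φ x j r := fun j => by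
    rw [hwdef, fderiv_app_coord φ x (hφ.differentiable (by simp) x) _ j,
      Jac_eq φ hφ x j r]
  have hψm : DifferentiableAt ℝ (fun y => ψ y m) (φ x) :=
    (contDiff_pi.mp hψ m).differentiable (by simp) (φ x)
  have hcomp : fderiv ℝ (fun y => ψ (φ y) m) x (Pi.single r 1)
      = fderiv ℝ (fun y => ψ y m) (φ x) w := by
    have h1 : fderiv ℝ ((fun y => ψ y m) ∘ φ) x
        = (fderiv ℝ (fun y => ψ y m) (φ x)).comp (fderiv ℝ φ x) :=
      fderiv_comp x hψm (hφ.differentiable (by simp) x)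
    have h2 : (fun y => ψ (φ y) m) = (fun y => ψ y m) ∘ φ := rfl
    rw [h2, h1]; rfl
  have hid : (fun y : Fin n → ℝ => ψ (φ y) m) = fun y => y m := by
    funext y; rw [hψφ y]
  rw [hid] at hcomp
  have hproj : fderiv ℝ (fun y : Fin n → ℝ => y m) x
      = (ContinuousLinearMap.proj (R := ℝ) (φ := fun _ : Fin n => ℝ) m) :=
    (ContinuousLinearMap.proj (R := ℝ) (φ := fun _ : Fin n => ℝ) m).fderiv
  rw [hproj] at hcomp
  have hlhs : (ContinuousLinearMap.proj (R := ℝ) (φ := fun _ : Fin n => ℝ) m)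
      (Pi.single r (1:ℝ)) = if m = r then 1 else 0 := by
    simp [Pi.single_apply]
  rw [hlhs] at hcomp
  rw [fderiv_expand _ _ _ hψm] at hcomp
  rw [hcomp]
  refine Finset.sum_congr rfl fun j _ => ?_
  rw [hw j]
  unfold Jac
  ring

lemma jac_symm (φ : (Fin n → ℝ) → (Fin n → ℝ)) (hφ : ContDiff ℝ (⊤ : ℕ∞) φ)
    (x : Fin n → ℝ) (k m r : Fin n) :
    pd (fun y => Jac φ y k r) x m = pd (fun y => Jac φ y k m) x r := by
  set f : (Fin n → ℝ) → ℝ := fun y => φ y k with hfdef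
  have hfk : ContDiff ℝ (⊤ : ℕ∞) f := contDiff_pi.mp hφ k
  have hf' : ContDiff ℝ (⊤:ℕ∞) (fderiv ℝ f) := hfk.fderiv_right (by simp)
  have hf'x : DifferentiableAt ℝ (fderiv ℝ f) x := hf'.differentiable (by simp) x
  have key : ∀ u i : Fin n,
      pd (fun y => Jac φ y k u) x i
        = fderiv ℝ (fderiv ℝ f) x (Pi.single i 1) (Pi.single u 1) := by
    intro u i
    have hJ : (fun y => Jac φ y k u) = fun y => fderiv ℝ f y (Pi.single u 1) := by
      funext y; exact Jac_eq φ hφ y k u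
    have happ0 := (ContinuousLinearMap.apply ℝ ℝ (Pi.single u (1:ℝ))).hasFDerivAt.comp x
        hf'x.hasFDerivAt
    have happ : HasFDerivAt (fun y => fderiv ℝ f y (Pi.single u (1:ℝ)))
        ((ContinuousLinearMap.apply ℝ ℝ (Pi.single u (1:ℝ))).comp
          (fderiv ℝ (fderiv ℝ f) x)) x := happ0
    rw [hJ, pd_eq_fderiv _ x i happ.differentiableAt, happ.fderiv]
    rfl
  rw [key r m, key m r]
  exact second_derivative_symmetric (f' := fderiv ℝ f)
    (fun y => (hfk.differentiable (by simp) y).hasFDerivAt) hf'x.hasFDerivAt _ _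

section time
variable {a b : ℝ → ℝ} (ha : ContDiff ℝ (⊤ : ℕ∞) a) (hb : ContDiff ℝ (⊤ : ℕ∞) b)
  (hba : ∀ t, b (a t) = t) (ha0 : ∀ t, deriv a t ≠ 0)

include ha in
lemma contDiff_deriv_a : ContDiff ℝ (⊤:ℕ∞) (deriv a) :=
  (contDiff_infty_iff_deriv.mp (ha.of_le (by simp))).2

include ha hb hba ha0 in
lemma deriv_b_eq (t : ℝ) : deriv b (a t) = (deriv a t)⁻¹ := by
  have hcomp : deriv (fun s => b (a s)) t = deriv b (a t) * deriv a t :=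
    deriv_comp t (hb.differentiable (by simp) (a t)) (ha.differentiable (by simp) t)
  have hid : (fun s => b (a s)) = id := by funext s; exact hba s
  rw [hid, deriv_id] at hcomp
  field_simp [ha0 t] at hcomp ⊢
  linarith [hcomp]

include ha ha0 in
lemma hasDerivAt_inv_deriv (t : ℝ) :
    HasDerivAt (fun s => (deriv a s)⁻¹)
      (-(deriv (deriv a) t) * ((deriv a t)⁻¹)^2) t := by
  have h1 : HasDerivAt (deriv a) (deriv (deriv a) t) t :=
    ((contDiff_deriv_a ha).differentiable (by simp) t).hasDerivAt
  have h2 := h1.inv (ha0 t)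
  have h3 : -(deriv (deriv a) t) * ((deriv a t)⁻¹)^2 = -deriv (deriv a) t / deriv a t ^ 2 := by
    rw [div_eq_mul_inv, ← inv_pow]
  rw [h3]; exact h2

include ha hb hba ha0 in
lemma second_deriv_b (t : ℝ) :
    deriv a t * deriv (deriv b) (a t)
      = -(deriv (deriv a) t) * ((deriv a t)⁻¹)^2 := by
  have hdb : ContDiff ℝ (⊤:ℕ∞) (deriv b) :=
    (contDiff_infty_iff_deriv.mp (hb.of_le (by simp))).2
  have hid : (fun s => deriv b (a s)) = fun s => (deriv a s)⁻¹ := by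
    funext s; exact deriv_b_eq ha hb hba ha0 s
  have h1 : deriv (fun s => deriv b (a s)) t = deriv (deriv b) (a t) * deriv a t :=
    deriv_comp t (hdb.differentiable (by simp) (a t)) (ha.differentiable (by simp) t)
  rw [hid, (hasDerivAt_inv_deriv ha ha0 t).deriv] at h1
  rw [mul_comm] at h1
  linarith [h1]

end time

lemma sum_mul_update (c v : Fin n → ℝ) (r : Fin n) (u : ℝ) :
    ∑ j, c j * Function.update v r u j = (∑ j, c j * v j) + c r * (u - v r) := by
  have h1 : ∀ j, c j * Function.update v r u j
      = c j * v j + (if j = r then c r * (u - v r) else 0) := by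
    intro j
    by_cases h : j = r
    · subst h; simp; ring
    · simp [Function.update_of_ne h, h]
  simp only [h1, Finset.sum_add_distrib, Finset.sum_ite_eq', Finset.mem_univ, if_true]

section jet
variable {F : ℝ → (Fin n → ℝ) → (Fin n → ℝ) → Fin n → ℝ}
  (hF : ContDiff ℝ (⊤ : ℕ∞) (fun p : ℝ × (Fin n → ℝ) × (Fin n → ℝ) => F p.1 p.2.1 p.2.2))

include hF in
lemma jet_sect_v (t : ℝ) (x : Fin n → ℝ) (j : Fin n) :
    ContDiff ℝ (⊤ : ℕ∞) (fun w => F t x w j) := by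
  have h1 : ContDiff ℝ (⊤ : ℕ∞) (fun w : Fin n → ℝ => ((t, x, w) : ℝ × (Fin n → ℝ) × (Fin n → ℝ))) :=
    contDiff_const.prodMk (contDiff_const.prodMk contDiff_id)
  exact (contDiff_pi.mp hF j).comp h1

include hF in
lemma jet_curve (c₁ : ℝ → Fin n → ℝ) (c₂ : ℝ → Fin n → ℝ)
    (hc₁ : ContDiff ℝ (⊤:ℕ∞) c₁) (hc₂ : ContDiff ℝ (⊤:ℕ∞) c₂) (j : Fin n) :
    ContDiff ℝ (⊤:ℕ∞) (fun s => F s (c₁ s) (c₂ s) j) := by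
  have h1 : ContDiff ℝ (⊤:ℕ∞) (fun s : ℝ => ((s, c₁ s, c₂ s) : ℝ × (Fin n → ℝ) × (Fin n → ℝ))) :=
    contDiff_id.prodMk (hc₁.prodMk hc₂)
  exact ((contDiff_pi.mp hF j).of_le (by simp)).comp h1

end jet

end KCC

namespace KCC
variable {n : ℕ}

lemma pd_fib_x (a : ℝ → ℝ) (φ : (Fin n → ℝ) → (Fin n → ℝ)) (hφ : ContDiff ℝ (⊤ : ℕ∞) φ)
    (t : ℝ) (x v : Fin n → ℝ) (k m : Fin n) :
    pd (fun y => fib a φ t y v k) x m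
      = (∑ q, pd (fun y => Jac φ y k q) x m * v q) * (deriv a t)⁻¹ := by
  have hdiff : ∀ q : Fin n, HasDerivAt (fun u => Jac φ (Function.update x m u) k q)
      (pd (fun y => Jac φ y k q) x m) (x m) := by
    intro q
    have hd : DifferentiableAt ℝ (fun u => Jac φ (Function.update x m u) k q) (x m) :=
      DifferentiableAt.comp (x m)
        ((contDiff_Jac φ hφ k q).differentiable (by simp) _)
        (hasDerivAt_update x m (x m)).differentiableAt
    exact hd.hasDerivAt
  have hsum : HasDerivAt
      (fun u => (∑ q, Jac φ (Function.update x m u) k q * v q) * (deriv a t)⁻¹)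
      ((∑ q, pd (fun y => Jac φ y k q) x m * v q) * (deriv a t)⁻¹) (x m) := by
    refine HasDerivAt.mul_const ?_ _
    exact HasDerivAt.fun_sum fun q _ => (hdiff q).mul_const (v q)
  have : pd (fun y => fib a φ t y v k)  x m
      = deriv (fun u => (∑ q, Jac φ (Function.update x m u) k q * v q) * (deriv a t)⁻¹)
        (x m) := by
    unfold pd fib dtdT
    rfl
  rw [this, hsum.deriv]

lemma deriv_fib_t (a : ℝ → ℝ) (ha : ContDiff ℝ (⊤ : ℕ∞) a) (ha0 : ∀ t, deriv a t ≠ 0)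
    (φ : (Fin n → ℝ) → (Fin n → ℝ)) (t : ℝ) (x v : Fin n → ℝ) (k : Fin n) :
    deriv (fun s => fib a φ s x v k) t
      = (∑ j, Jac φ x k j * v j) * (-(deriv (deriv a) t) * ((deriv a t)⁻¹)^2) := by
  have h := (hasDerivAt_inv_deriv ha ha0 t).const_mul (∑ j, Jac φ x k j * v j)
  have hfun : (fun s => fib a φ s x v k)
      = fun s => (∑ j, Jac φ x k j * v j) * (deriv a s)⁻¹ := by
    funext s; simp [fib, dtdT]
  rw [hfun]
  exact h.deriv

lemma pd_comp_fib (a : ℝ → ℝ) (φ : (Fin n → ℝ) → (Fin n → ℝ))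
    (g : (Fin n → ℝ) → ℝ) (t : ℝ) (x v : Fin n → ℝ) (r : Fin n)
    (hg : DifferentiableAt ℝ g (fib a φ t x v)) :
    pd (fun w => g (fib a φ t x w)) v r
      = ∑ p, (Jac φ x p r * (deriv a t)⁻¹) * pd g (fib a φ t x v) p := by
  set d : Fin n → ℝ := fun p => Jac φ x p r * (deriv a t)⁻¹ with hd
  have key : ∀ u : ℝ, fib a φ t x (Function.update v r u)
      = fib a φ t x v + (u - v r) • d := by
    intro u
    funext p
    simp only [fib, dtdT, Pi.add_apply, Pi.smul_apply, smul_eq_mul, hd]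
    rw [sum_mul_update]
    ring
  have hinner : HasDerivAt (fun u : ℝ => fib a φ t x v + (u - v r) • d) d (v r) := by
    have h1 : (fun u : ℝ => fib a φ t x v + (u - v r) • d)
        = fun u => (fib a φ t x v - (v r) • d) + u • d := by
      funext u; module
    rw [h1]
    simpa using ((hasDerivAt_id (v r)).smul_const d).const_add (fib a φ t x v - (v r) • d)
  have hfd : HasFDerivAt g (fderiv ℝ g (fib a φ t x v))
      (fib a φ t x v + ((v r) - (v r)) • d) := by
    have h2 : fib a φ t x v + ((v r) - (v r)) • d = fib a φ t x v := by simp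
    rw [h2]; exact hg.hasFDerivAt
  have hcomp : HasDerivAt (fun u => g (fib a φ t x v + (u - v r) • d))
      (fderiv ℝ g (fib a φ t x v) d) (v r) := hfd.comp_hasDerivAt (v r) hinner
  have h3 : pd (fun w => g (fib a φ t x w)) v r
      = deriv (fun u => g (fib a φ t x v + (u - v r) • d)) (v r) := by
    unfold pd
    congr 1
    funext u
    exact congrArg g (key u)
  rw [h3, hcomp.deriv, fderiv_expand g _ d hg]

end KCC

namespace KCC
variable {n : ℕ}

lemma hasDerivAt_sum_update (cf v : Fin n → ℝ) (r : Fin n) :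
    HasDerivAt (fun u => ∑ q, cf q * Function.update v r u q) (cf r) (v r) := by
  have h1 : (fun u : ℝ => ∑ q, cf q * Function.update v r u q)
      = fun u => (∑ q, cf q * v q) + cf r * (u - v r) := by
    funext u; rw [sum_mul_update]
  rw [h1]
  simpa using (((hasDerivAt_id (v r)).sub_const (v r)).const_mul (cf r)).const_add
    (∑ q, cf q * v q)

lemma sum_contract (φ ψ : (Fin n → ℝ) → (Fin n → ℝ)) (hφ : ContDiff ℝ (⊤ : ℕ∞) φ)
    (hψ : ContDiff ℝ (⊤ : ℕ∞) ψ) (hψφ : ∀ x, ψ (φ x) = x) (x v : Fin n → ℝ) (m : Fin n) :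
    ∑ j, Jac ψ (φ x) m j * (∑ q, Jac φ x j q * v q) = v m := by
  calc ∑ j, Jac ψ (φ x) m j * (∑ q, Jac φ x j q * v q)
      = ∑ j, ∑ q, Jac ψ (φ x) m j * Jac φ x j q * v q := by
        refine Finset.sum_congr rfl fun j _ => ?_
        rw [Finset.mul_sum]
        exact Finset.sum_congr rfl fun q _ => by ring
    _ = ∑ q, (∑ j, Jac ψ (φ x) m j * Jac φ x j q) * v q := by
        rw [Finset.sum_comm]
        exact Finset.sum_congr rfl fun q _ => by rw [Finset.sum_mul]
    _ = ∑ q, (if m = q then (1:ℝ) else 0) * v q := by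
        refine Finset.sum_congr rfl fun q _ => ?_
        rw [jac_inv φ ψ hφ hψ hψφ x m q]
    _ = v m := by simp

end KCC

namespace KCC
variable {n : ℕ}

lemma connection_transform
    (a : ℝ → ℝ) (φ ψ : (Fin n → ℝ) → (Fin n → ℝ))
    (ha : ContDiff ℝ (⊤ : ℕ∞) a) (ha0 : ∀ t, deriv a t ≠ 0)
    (hφ : ContDiff ℝ (⊤ : ℕ∞) φ) (hψ : ContDiff ℝ (⊤ : ℕ∞) ψ) (hψφ : ∀ x, ψ (φ x) = x)
    (F Ft : ℝ → (Fin n → ℝ) → (Fin n → ℝ) → Fin n → ℝ)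
    (hF : ContDiff ℝ (⊤ : ℕ∞) (fun p : ℝ × (Fin n → ℝ) × (Fin n → ℝ) => F p.1 p.2.1 p.2.2))
    (hFt : ContDiff ℝ (⊤ : ℕ∞) (fun p : ℝ × (Fin n → ℝ) × (Fin n → ℝ) => Ft p.1 p.2.1 p.2.2))
    (hFlaw : SODELaw a φ ψ F Ft)
    (t : ℝ) (x v : Fin n → ℝ) (k r : Fin n) :
    ∑ p, Jac φ x p r * (deriv a t)⁻¹ * pd (fun w => Ft (a t) (φ x) w k) (fib a φ t x v) p
      = (∑ j, pd (fun w => F t x w j) v r * ((deriv a t)⁻¹)^2 * Jac φ x k j)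
        + Jac φ x k r * deriv (deriv a) t * ((deriv a t)⁻¹)^3
        - 2 * (∑ q, pd (fun y => Jac φ y k r) x q * v q) * ((deriv a t)⁻¹)^2 := by
  set iA : ℝ := (deriv a t)⁻¹ with hiA
  set A' : ℝ := deriv (deriv a) t with hA'
  set J : Fin n → Fin n → ℝ := Jac φ x with hJ
  set Jψ : Fin n → Fin n → ℝ := Jac ψ (φ x) with hJψ
  set P : Fin n → Fin n → ℝ := fun m q => pd (fun y => Jac φ y k q) x m with hP
  -- Step 1 : rewrite the transformed SODE as an elementary function of w
  have hRHSfun : (fun w => Ft (a t) (φ x) (fib a φ t x w) k)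
      = fun w => (∑ j, F t x w j * iA^2 * J k j)
          - iA * ((∑ j, J k j * w j) * (-A' * iA^2))
          - ∑ j, ∑ m, Jψ m j * ((∑ q, P m q * w q) * iA) * ((∑ q, J j q * w q) * iA) := by
    funext w
    rw [hFlaw t x w k, deriv_fib_t a ha ha0 φ t x w k]
    simp only [pd_fib_x a φ hφ t x w k]
    simp only [fib, dtdT, hiA, hA', hJ, hJψ, hP]
  -- Step 2 : differentiate the right-hand side in the direction r
  have hFj : ∀ j : Fin n, HasDerivAt (fun u => F t x (Function.update v r u) j)
      (pd (fun w => F t x w j) v r) (v r) := by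
    intro j
    have hd : DifferentiableAt ℝ (fun u => F t x (Function.update v r u) j) (v r) :=
      DifferentiableAt.comp (v r)
        (((jet_sect_v hF t x j)).differentiable (by simp) _)
        (hasDerivAt_update v r (v r)).differentiableAt
    exact hd.hasDerivAt
  have h1 : HasDerivAt (fun u => ∑ j, F t x (Function.update v r u) j * iA^2 * J k j)
      (∑ j, pd (fun w => F t x w j) v r * iA^2 * J k j) (v r) :=
    HasDerivAt.fun_sum fun j _ => ((hFj j).mul_const _).mul_const _
  have h2 : HasDerivAt
      (fun u => iA * ((∑ j, J k j * Function.update v r u j) * (-A' * iA^2)))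
      (iA * (J k r * (-A' * iA^2))) (v r) :=
    ((hasDerivAt_sum_update (J k) v r).mul_const _).const_mul iA
  have h3 : HasDerivAt
      (fun u => ∑ j, ∑ m, Jψ m j * ((∑ q, P m q * Function.update v r u q) * iA)
        * ((∑ q, J j q * Function.update v r u q) * iA))
      (∑ j, ∑ m,
        (Jψ m j * (P m r * iA) * ((∑ q, J j q * Function.update v r (v r) q) * iA)
          + Jψ m j * ((∑ q, P m q * Function.update v r (v r) q) * iA) * (J j r * iA)))
      (v r) := by
    refine HasDerivAt.fun_sum fun j _ => HasDerivAt.fun_sum fun m _ => ?_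
    exact (((hasDerivAt_sum_update (P m) v r).mul_const iA).const_mul (Jψ m j)).mul
      ((hasDerivAt_sum_update (J j) v r).mul_const iA)
  have htot := (h1.sub h2).sub h3
  -- Step 3 : identify the two pd's
  have hL : pd (fun w => Ft (a t) (φ x) (fib a φ t x w) k) v r
      = ∑ p, (J p r * iA) * pd (fun w => Ft (a t) (φ x) w k) (fib a φ t x v) p := by
    exact pd_comp_fib a φ _ t x v r ((jet_sect_v hFt (a t) (φ x) k).differentiable (by simp) _)
  have hR : pd (fun w => Ft (a t) (φ x) (fib a φ t x w) k) v r
      = (∑ j, pd (fun w => F t x w j) v r * iA^2 * J k j)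
        - iA * (J k r * (-A' * iA^2))
        - ∑ j, ∑ m,
          (Jψ m j * (P m r * iA) * ((∑ q, J j q * v q) * iA)
            + Jψ m j * ((∑ q, P m q * v q) * iA) * (J j r * iA)) := by
    have := htot.deriv
    simp only [Function.update_eq_self] at this
    rw [hRHSfun]
    exact this
  rw [hL] at hR
  -- Step 4 : simplify the double sums
  have hhalf1 : ∑ j, ∑ m, Jψ m j * (P m r * iA) * ((∑ q, J j q * v q) * iA)
      = (∑ q, P q r * v q) * iA^2 := by
    rw [Finset.sum_comm]
    have hm : ∀ m : Fin n, ∑ j, Jψ m j * (P m r * iA) * ((∑ q, J j q * v q) * iA)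
        = P m r * v m * iA^2 := by
      intro m
      have : ∑ j, Jψ m j * (P m r * iA) * ((∑ q, J j q * v q) * iA)
          = (P m r * iA^2) * ∑ j, Jψ m j * (∑ q, J j q * v q) := by
        rw [Finset.mul_sum]
        exact Finset.sum_congr rfl fun j _ => by ring
      rw [this, hJψ, hJ, sum_contract φ ψ hφ hψ hψφ x v m]
      ring
    rw [Finset.sum_congr rfl fun m _ => hm m, ← Finset.sum_mul]
  have hhalf2 : ∑ j, ∑ m, Jψ m j * ((∑ q, P m q * v q) * iA) * (J j r * iA)
      = (∑ q, P q r * v q) * iA^2 := by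
    rw [Finset.sum_comm]
    have hm : ∀ m : Fin n, ∑ j, Jψ m j * ((∑ q, P m q * v q) * iA) * (J j r * iA)
        = (∑ q, P m q * v q) * iA^2 * (if m = r then 1 else 0) := by
      intro m
      have : ∑ j, Jψ m j * ((∑ q, P m q * v q) * iA) * (J j r * iA)
          = ((∑ q, P m q * v q) * iA^2) * ∑ j, Jψ m j * J j r := by
        rw [Finset.mul_sum]
        exact Finset.sum_congr rfl fun j _ => by ring
      rw [this, hJψ, hJ, jac_inv φ ψ hφ hψ hψφ x m r]
    rw [Finset.sum_congr rfl fun m _ => hm m]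
    have hsym : ∀ q : Fin n, P r q = P q r := fun q => jac_symm φ hφ x k r q
    have hs : ∑ q, P r q * v q = ∑ q, P q r * v q :=
      Finset.sum_congr rfl fun q _ => by rw [hsym q]
    simp only [mul_ite, mul_one, mul_zero, Finset.sum_ite_eq', Finset.mem_univ, if_true]
    rw [hs]
  -- Step 5 : conclude
  have hsplit : ∑ j, ∑ m,
        (Jψ m j * (P m r * iA) * ((∑ q, J j q * v q) * iA)
          + Jψ m j * ((∑ q, P m q * v q) * iA) * (J j r * iA))
      = (∑ j, ∑ m, Jψ m j * (P m r * iA) * ((∑ q, J j q * v q) * iA))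
        + ∑ j, ∑ m, Jψ m j * ((∑ q, P m q * v q) * iA) * (J j r * iA) := by
    rw [← Finset.sum_add_distrib]
    exact Finset.sum_congr rfl fun j _ => Finset.sum_add_distrib
  rw [hsplit, hhalf1, hhalf2] at hR
  rw [hR]
  simp only [hP]
  ring

lemma vel_transform (a b : ℝ → ℝ) (φ : (Fin n → ℝ) → (Fin n → ℝ))
    (ha : ContDiff ℝ (⊤ : ℕ∞) a) (hb : ContDiff ℝ (⊤ : ℕ∞) b) (hba : ∀ t, b (a t) = t)
    (ha0 : ∀ t, deriv a t ≠ 0) (hφ : ContDiff ℝ (⊤ : ℕ∞) φ)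
    (c : ℝ → Fin n → ℝ) (hc : ContDiff ℝ (⊤ : ℕ∞) c) (t' : ℝ) :
    vel (fun s => φ (c (b s))) (a t') = fib a φ t' (c t') (vel c t') := by
  have hbd : HasDerivAt b ((deriv a t')⁻¹) (a t') := by
    have h := (hb.differentiable (by simp) (a t')).hasDerivAt
    rwa [deriv_b_eq ha hb hba ha0 t'] at h
  have hcv : HasDerivAt c (vel c t') (b (a t')) := by
    rw [hba t']; exact vel_hasDerivAt c hc t'
  have hsc : HasDerivAt (fun s => c (b s)) ((deriv a t')⁻¹ • vel c t') (a t') :=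
    hcv.scomp (a t') hbd
  funext i
  have hφi : DifferentiableAt ℝ (fun y => φ y i) (c (b (a t'))) :=
    (contDiff_pi.mp hφ i).differentiable (by simp) _
  have hcomp : HasDerivAt (fun s => φ (c (b s)) i)
      (fderiv ℝ (fun y => φ y i) (c (b (a t'))) ((deriv a t')⁻¹ • vel c t')) (a t') :=
    hφi.hasFDerivAt.comp_hasDerivAt (f := fun s => c (b s)) (a t') hsc
  have h1 : vel (fun s => φ (c (b s))) (a t') i
      = fderiv ℝ (fun y => φ y i) (c (b (a t'))) ((deriv a t')⁻¹ • vel c t') :=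
    hcomp.deriv
  rw [h1, hba t', map_smul, fderiv_expand _ _ _
    ((contDiff_pi.mp hφ i).differentiable (by simp) (c t'))]
  simp only [fib, dtdT, smul_eq_mul]
  rw [Finset.mul_sum, Finset.sum_mul]
  refine Finset.sum_congr rfl fun j _ => ?_
  unfold Jac
  ring

end KCC

namespace KCC
variable {n : ℕ}

lemma final_algebra (D1 Tv Jk Sq : Fin n → ℝ) (PF : Fin n → Fin n → ℝ)
    (iA A'' Hv : ℝ) :
    (∑ j, ((D1 j * iA + Tv j * (-A'' * iA^2)) * Jk j + Tv j * iA * Sq j)) * iA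
      + 1/2 * ∑ j, Tv j * ((∑ i, PF i j * iA^2 * Jk i) + Jk j * A'' * iA^3
          - (2 * Sq j) * iA^2)
      - 1/2 * (Hv * iA + -A'' * iA^2) * ∑ j, Tv j * iA * Jk j
      = ∑ j, (D1 j + 1/2 * ∑ r, PF j r * Tv r - 1/2 * Hv * Tv j) * iA^2 * Jk j := by
  have hDF : ∑ j, ∑ i, Tv j * (PF i j * iA^2 * Jk i)
      = ∑ j, ∑ r, PF j r * Tv r * (iA^2 * Jk j) := by
    rw [Finset.sum_comm]
    exact Finset.sum_congr rfl fun j _ => Finset.sum_congr rfl fun r _ => by ring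
  have e1 : ∀ j : Fin n, Tv j * ((∑ i, PF i j * iA^2 * Jk i) + Jk j * A'' * iA^3
        - (2 * Sq j) * iA^2)
      = (∑ i, Tv j * (PF i j * iA^2 * Jk i))
        + (Tv j * (Jk j * A'' * iA^3) - Tv j * ((2 * Sq j) * iA^2)) := by
    intro j
    calc Tv j * ((∑ i, PF i j * iA^2 * Jk i) + Jk j * A'' * iA^3 - (2 * Sq j) * iA^2)
        = Tv j * (∑ i, PF i j * iA^2 * Jk i)
          + (Tv j * (Jk j * A'' * iA^3) - Tv j * ((2 * Sq j) * iA^2)) := by ring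
      _ = _ := by rw [Finset.mul_sum]
  have e2 : ∑ j, Tv j * ((∑ i, PF i j * iA^2 * Jk i) + Jk j * A'' * iA^3
        - (2 * Sq j) * iA^2)
      = (∑ j, ∑ i, Tv j * (PF i j * iA^2 * Jk i))
        + ∑ j, (Tv j * (Jk j * A'' * iA^3) - Tv j * ((2 * Sq j) * iA^2)) := by
    rw [← Finset.sum_add_distrib]
    exact Finset.sum_congr rfl fun j _ => e1 j
  have e3 : ∀ j : Fin n, (D1 j + 1/2 * ∑ r, PF j r * Tv r - 1/2 * Hv * Tv j) * iA^2 * Jk j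
      = (D1 j - 1/2 * Hv * Tv j) * iA^2 * Jk j
        + 1/2 * ∑ r, PF j r * Tv r * (iA^2 * Jk j) := by
    intro j
    have h : ∑ r, PF j r * Tv r * (iA^2 * Jk j)
        = (∑ r, PF j r * Tv r) * (iA^2 * Jk j) := (Finset.sum_mul _ _ _).symm
    rw [h]; ring
  have e4 : ∑ j, (D1 j + 1/2 * ∑ r, PF j r * Tv r - 1/2 * Hv * Tv j) * iA^2 * Jk j
      = (∑ j, (D1 j - 1/2 * Hv * Tv j) * iA^2 * Jk j)
        + 1/2 * ∑ j, ∑ r, PF j r * Tv r * (iA^2 * Jk j) := by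
    rw [Finset.mul_sum, ← Finset.sum_add_distrib]
    exact Finset.sum_congr rfl fun j _ => e3 j
  rw [e2, e4, ← hDF]
  rw [Finset.sum_mul, mul_add]
  have e5 : 1/2 * (Hv * iA + -A'' * iA^2) * ∑ j, Tv j * iA * Jk j
      = ∑ j, 1/2 * (Hv * iA + -A'' * iA^2) * (Tv j * iA * Jk j) :=
    Finset.mul_sum _ _ _
  have e6 : (∑ j, ((D1 j * iA + Tv j * (-A'' * iA^2)) * Jk j + Tv j * iA * Sq j) * iA)
        + 1/2 * ∑ j, (Tv j * (Jk j * A'' * iA^3) - Tv j * ((2 * Sq j) * iA^2))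
        - 1/2 * (Hv * iA + -A'' * iA^2) * ∑ j, Tv j * iA * Jk j
      = ∑ j, (D1 j - 1/2 * Hv * Tv j) * iA^2 * Jk j := by
    rw [e5, Finset.mul_sum, ← Finset.sum_add_distrib, ← Finset.sum_sub_distrib]
    refine Finset.sum_congr rfl fun j _ => ?_
    ring
  linear_combination e6

end KCC

open KCC

/-- The h-KCC-covariant derivative of a d-tensor `T^{(i)}_{(1)}` along a curve transforms
as a d-tensor of type `T^{(i)}_{(1)1}`, i.e. with factor `(dt/dt̃)² ∂x̃^k/∂x^j`. -/
theorem covariant_derivative_is_dtensor {n : ℕ}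
    (a b : ℝ → ℝ) (φ ψ : (Fin n → ℝ) → (Fin n → ℝ))
    (hcc : IsCoordChange n a b φ ψ)
    (F Ft T Tt : ℝ → (Fin n → ℝ) → (Fin n → ℝ) → Fin n → ℝ)
    (hF : SmoothJet F) (hFt : SmoothJet Ft) (hT : SmoothJet T) (hTt : SmoothJet Tt)
    (hFlaw : SODELaw a φ ψ F Ft)
    (H Ht : ℝ → ℝ) (hH : ContDiff ℝ (⊤ : ℕ∞) H)
    (hHrule : TemporalChristoffelLaw a b H Ht)
    (hTlaw : DTensorLaw a φ T Tt)
    (c : ℝ → Fin n → ℝ) (hc : ContDiff ℝ (⊤ : ℕ∞) c) :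
    ∀ (t : ℝ) (k : Fin n),
      covD Ft Tt Ht (fun s => φ (c (b s))) (a t) k =
        ∑ j, covD F T H c t j * (dtdT a t) ^ 2 * Jac φ (c t) k j := by
  obtain ⟨ha, hb, hba, hab, ha0, hφ, hψ, hψφ, hφψ⟩ := hcc
  intro t k
  have hc' : ContDiff ℝ (⊤ : ℕ∞) (fun s => φ (c (b s))) := hφ.comp (hc.comp hb)
  have hvelc' : ContDiff ℝ (⊤:ℕ∞) (vel (fun s => φ (c (b s)))) := contDiff_vel _ hc'
  have hvt : ∀ t', vel (fun s => φ (c (b s))) (a t') = fib a φ t' (c t') (vel c t') :=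
    vel_transform a b φ ha hb hba ha0 hφ c hc
  -- the pulled-back scalar function and its derivative
  have hgd : ContDiff ℝ (⊤:ℕ∞)
      (fun s => Tt s (φ (c (b s))) (vel (fun s' => φ (c (b s'))) s) k) :=
    jet_curve hTt _ _ (hc'.of_le (by simp)) hvelc' k
  have hgh : (fun t' => Tt (a t') (φ (c (b (a t'))))
        (vel (fun s' => φ (c (b s'))) (a t')) k)
      = fun t' => ∑ j, T t' (c t') (vel c t') j * (deriv a t')⁻¹ * Jac φ (c t') k j := by
    funext t'
    rw [hba t', hvt t', hTlaw t' (c t') (vel c t') k]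
    simp only [dtdT]
  -- derivative of the right-hand side of hgh
  have hT_j : ∀ j : Fin n, HasDerivAt (fun t' => T t' (c t') (vel c t') j)
      (deriv (fun s => T s (c s) (vel c s) j) t) t := fun j =>
    ((jet_curve hT c (vel c) (hc.of_le (by simp)) (contDiff_vel c hc) j).differentiable
      (by simp) t).hasDerivAt
  have hiAd := hasDerivAt_inv_deriv ha ha0 t
  have hJ_j : ∀ j : Fin n, HasDerivAt (fun t' => Jac φ (c t') k j)
      (∑ m, vel c t m * pd (fun y => Jac φ y k j) (c t) m) t := fun j =>
    hasDerivAt_comp_curve _ (contDiff_Jac φ hφ k j) c hc t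
  have hh : HasDerivAt
      (fun t' => ∑ j, T t' (c t') (vel c t') j * (deriv a t')⁻¹ * Jac φ (c t') k j)
      (∑ j, ((deriv (fun s => T s (c s) (vel c s) j) t * (deriv a t)⁻¹
          + T t (c t) (vel c t) j * (-(deriv (deriv a) t) * ((deriv a t)⁻¹)^2))
            * Jac φ (c t) k j
        + T t (c t) (vel c t) j * (deriv a t)⁻¹
            * (∑ m, vel c t m * pd (fun y => Jac φ y k j) (c t) m))) t :=
    HasDerivAt.fun_sum fun j _ => ((hT_j j).mul hiAd).mul (hJ_j j)
  have hderg : deriv (fun s => Tt s (φ (c (b s))) (vel (fun s' => φ (c (b s'))) s) k) (a t)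
      = (∑ j, ((deriv (fun s => T s (c s) (vel c s) j) t * (deriv a t)⁻¹
          + T t (c t) (vel c t) j * (-(deriv (deriv a) t) * ((deriv a t)⁻¹)^2))
            * Jac φ (c t) k j
        + T t (c t) (vel c t) j * (deriv a t)⁻¹
            * (∑ m, vel c t m * pd (fun y => Jac φ y k j) (c t) m))) * (deriv a t)⁻¹ := by
    have hcmp : deriv (fun t' => Tt (a t') (φ (c (b (a t'))))
          (vel (fun s' => φ (c (b s'))) (a t')) k) t
        = deriv (fun s => Tt s (φ (c (b s))) (vel (fun s' => φ (c (b s'))) s) k) (a t)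
            * deriv a t :=
      deriv_comp t (hgd.differentiable (by simp) (a t)) (ha.differentiable (by simp) t)
    rw [hgh, hh.deriv] at hcmp
    rw [hcmp, mul_assoc, mul_inv_cancel₀ (ha0 t), mul_one]
  -- the temporal Christoffel factor
  have hHt : Ht (a t) = H t * (deriv a t)⁻¹ + (-(deriv (deriv a) t) * ((deriv a t)⁻¹)^2) := by
    rw [hHrule t, second_deriv_b ha hb hba ha0 t]
    simp only [dtdT]
  -- unfold covD and substitute
  simp only [covD]
  rw [hba t]
  rw [hvt t]
  rw [hderg, hHt]
  have hTlaw' : ∀ p, Tt (a t) (φ (c t)) (fib a φ t (c t) (vel c t)) p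
      = ∑ j, T t (c t) (vel c t) j * (deriv a t)⁻¹ * Jac φ (c t) p j := fun p => by
    rw [hTlaw t (c t) (vel c t) p]; simp only [dtdT]
  simp only [hTlaw', dtdT]
  -- contract the middle term with the transformed connection
  have hmid : ∑ p, pd (fun w => Ft (a t) (φ (c t)) w k) (fib a φ t (c t) (vel c t)) p
        * (∑ j, T t (c t) (vel c t) j * (deriv a t)⁻¹ * Jac φ (c t) p j)
      = ∑ j, T t (c t) (vel c t) j *
          ((∑ i, pd (fun w => F t (c t) w i) (vel c t) j * ((deriv a t)⁻¹)^2
              * Jac φ (c t) k i)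
            + Jac φ (c t) k j * deriv (deriv a) t * ((deriv a t)⁻¹)^3
            - 2 * (∑ q, pd (fun y => Jac φ y k j) (c t) q * vel c t q)
                * ((deriv a t)⁻¹)^2) := by
    calc ∑ p, pd (fun w => Ft (a t) (φ (c t)) w k) (fib a φ t (c t) (vel c t)) p
          * (∑ j, T t (c t) (vel c t) j * (deriv a t)⁻¹ * Jac φ (c t) p j)
        = ∑ p, ∑ j, pd (fun w => Ft (a t) (φ (c t)) w k) (fib a φ t (c t) (vel c t)) p
            * (T t (c t) (vel c t) j * (deriv a t)⁻¹ * Jac φ (c t) p j) := by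
          exact Finset.sum_congr rfl fun p _ => Finset.mul_sum _ _ _
      _ = ∑ j, ∑ p, pd (fun w => Ft (a t) (φ (c t)) w k) (fib a φ t (c t) (vel c t)) p
            * (T t (c t) (vel c t) j * (deriv a t)⁻¹ * Jac φ (c t) p j) := Finset.sum_comm
      _ = ∑ j, T t (c t) (vel c t) j * (∑ p, Jac φ (c t) p j * (deriv a t)⁻¹
            * pd (fun w => Ft (a t) (φ (c t)) w k) (fib a φ t (c t) (vel c t)) p) := by
          refine Finset.sum_congr rfl fun j _ => ?_
          rw [Finset.mul_sum]
          exact Finset.sum_congr rfl fun p _ => by ring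
      _ = _ := by
          refine Finset.sum_congr rfl fun j _ => ?_
          rw [connection_transform a φ ψ ha ha0 hφ hψ hψφ F Ft hF hFt hFlaw t (c t)
            (vel c t) k j]
  rw [hmid]
  have hD3 : ∀ j : Fin n, (∑ m, vel c t m * pd (fun y => Jac φ y k j) (c t) m)
      = ∑ q, pd (fun y => Jac φ y k j) (c t) q * vel c t q := fun j =>
    Finset.sum_congr rfl fun m _ => mul_comm _ _
  simp only [hD3]
  exact final_algebra (fun j => deriv (fun s => T s (c s) (vel c s) j) t)
    (fun j => T t (c t) (vel c t) j) (fun j => Jac φ (c t) k j)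
    (fun j => ∑ q, pd (fun y => Jac φ y k j) (c t) q * vel c t q)
    (fun j r => pd (fun w => F t (c t) w j) (vel c t) r)
    ((deriv a t)⁻¹) (deriv (deriv a) t) (H t)
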